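/- arXiv:1604.02012 — 2 statements merged into one kernel-verified Lean document; each statement's English description precedes it below -/
import Mathlib

section
/- The Gibbons-Hermsen Hamiltonians Î^{(2)}_k form a Lenard chain with respect to the two brackets: for every integer k ≥ 0 and every smooth function g : W → ℝ, one has {Î^{(2)}_k, g}_1 = {Î^{(2)}_{k+1}, g}_0 identically on W, where Î^{(2)}_k(A,B,x,ξ,y,υ) = tr(A^k (xξ + υy)). -/
attribute [local instance] Matrix.normedAddCommGroup Matrix.normedSpace

/-- The representation space
`W = Mat_n(ℝ) × Mat_n(ℝ) × Mat_{n×1}(ℝ) × Mat_{1×n}(ℝ) × Mat_{1×n}(ℝ) × Mat_{n×1}(ℝ)`,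
with points `(A, B, x, ξ, y, υ)`. -/
abbrev WW (n : ℕ) := Matrix (Fin n) (Fin n) ℝ × Matrix (Fin n) (Fin n) ℝ ×
  Matrix (Fin n) (Fin 1) ℝ × Matrix (Fin 1) (Fin n) ℝ ×
  Matrix (Fin 1) (Fin n) ℝ × Matrix (Fin n) (Fin 1) ℝ

/-- The gradient matrix `f_A ∈ Mat_n(ℝ)`. -/
noncomputable def gA {n : ℕ} (f : WW n → ℝ) (p : WW n) : Matrix (Fin n) (Fin n) ℝ :=
  fun i j => fderiv ℝ f p (Matrix.single j i 1, 0, 0, 0, 0, 0)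

/-- The gradient matrix `f_B ∈ Mat_n(ℝ)`. -/
noncomputable def gB {n : ℕ} (f : WW n → ℝ) (p : WW n) : Matrix (Fin n) (Fin n) ℝ :=
  fun i j => fderiv ℝ f p (0, Matrix.single j i 1, 0, 0, 0, 0)

/-- The gradient matrix `f_x ∈ Mat_{1×n}(ℝ)`. -/
noncomputable def gx {n : ℕ} (f : WW n → ℝ) (p : WW n) : Matrix (Fin 1) (Fin n) ℝ :=
  fun _ j => fderiv ℝ f p (0, 0, Matrix.single j 0 1, 0, 0, 0)

/-- The gradient matrix `f_ξ ∈ Mat_{n×1}(ℝ)`. -/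
noncomputable def gxi {n : ℕ} (f : WW n → ℝ) (p : WW n) : Matrix (Fin n) (Fin 1) ℝ :=
  fun i _ => fderiv ℝ f p (0, 0, 0, Matrix.single 0 i 1, 0, 0)

/-- The gradient matrix `f_y ∈ Mat_{n×1}(ℝ)`. -/
noncomputable def gy {n : ℕ} (f : WW n → ℝ) (p : WW n) : Matrix (Fin n) (Fin 1) ℝ :=
  fun i _ => fderiv ℝ f p (0, 0, 0, 0, Matrix.single 0 i 1, 0)

/-- The gradient matrix `f_υ ∈ Mat_{1×n}(ℝ)`. -/
noncomputable def gu {n : ℕ} (f : WW n → ℝ) (p : WW n) : Matrix (Fin 1) (Fin n) ℝ :=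
  fun _ j => fderiv ℝ f p (0, 0, 0, 0, 0, Matrix.single j 0 1)

/-- The canonical Poisson bracket on `W`:
`{f,g}_0 = tr(f_B g_A − f_A g_B) + g_x f_ξ − f_x g_ξ + f_υ g_y − g_υ f_y`. -/
noncomputable def br0 {n : ℕ} (f g : WW n → ℝ) (p : WW n) : ℝ :=
  (gB f p * gA g p - gA f p * gB g p).trace +
  (gx g p * gxi f p).trace - (gx f p * gxi g p).trace +
  (gu f p * gy g p).trace - (gu g p * gy f p).trace

/-- The second Gibbons-Hermsen bracket on `W`:
`{f,g}_1 = tr(g_A A f_B) + tr(g_B (B f_B − f_B B − f_A A − f_ξ ξ − f_y y))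
  + g_x A f_ξ + (ξ f_B − f_x A) g_ξ + (f_υ A + y f_B) g_y − g_υ A f_y`. -/
noncomputable def br1 {n : ℕ} (f g : WW n → ℝ) (p : WW n) : ℝ :=
  (gA g p * p.1 * gB f p).trace +
  (gB g p * (p.2.1 * gB f p - gB f p * p.2.1 - gA f p * p.1 -
    gxi f p * p.2.2.2.1 - gy f p * p.2.2.2.2.1)).trace +
  (gx g p * p.1 * gxi f p).trace +
  ((p.2.2.2.1 * gB f p - gx f p * p.1) * gxi g p).trace +
  ((gu f p * p.1 + p.2.2.2.2.1 * gB f p) * gy g p).trace -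
  (gu g p * p.1 * gy f p).trace

/-- Smoothness of a function on `W`. -/
def SmoothFn {n : ℕ} (f : WW n → ℝ) : Prop := ContDiff ℝ (⊤ : ℕ∞) f

/-- The Gibbons-Hermsen Hamiltonian `Î^{(2)}_k(A,B,x,ξ,y,υ) = tr(A^k (xξ + υy))`. -/
noncomputable def Ihat2 {n : ℕ} (k : ℕ) (p : WW n) : ℝ :=
  (p.1 ^ k * (p.2.2.1 * p.2.2.2.1 + p.2.2.2.2.2 * p.2.2.2.2.1)).trace

namespace LenardAux

open Matrix

/-- Matrix multiplication as a continuous bilinear map. -/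
noncomputable def mulCLM (a b c : ℕ) :
    Matrix (Fin a) (Fin b) ℝ →L[ℝ] Matrix (Fin b) (Fin c) ℝ →L[ℝ] Matrix (Fin a) (Fin c) ℝ :=
  LinearMap.toContinuousLinearMap <|
    (LinearMap.toContinuousLinearMap :
        (Matrix (Fin b) (Fin c) ℝ →ₗ[ℝ] Matrix (Fin a) (Fin c) ℝ) ≃ₗ[ℝ] _).toLinearMap ∘ₗ
      LinearMap.mk₂ ℝ (fun A B => A * B) Matrix.add_mul Matrix.smul_mul Matrix.mul_add
        fun r A B => Matrix.mul_smul A r B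

@[simp] lemma mulCLM_apply {a b c : ℕ} (A : Matrix (Fin a) (Fin b) ℝ)
    (B : Matrix (Fin b) (Fin c) ℝ) : mulCLM a b c A B = A * B := rfl

lemma hasFDerivAt_matmul {E : Type*} [NormedAddCommGroup E] [NormedSpace ℝ E]
    {a b c : ℕ} {f : E → Matrix (Fin a) (Fin b) ℝ} {g : E → Matrix (Fin b) (Fin c) ℝ}
    {f' : E →L[ℝ] Matrix (Fin a) (Fin b) ℝ} {g' : E →L[ℝ] Matrix (Fin b) (Fin c) ℝ} {x : E}
    (hf : HasFDerivAt f f' x) (hg : HasFDerivAt g g' x) :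
    HasFDerivAt (fun y => f y * g y)
      ((mulCLM a b c).precompR E (f x) g' + (mulCLM a b c).precompL E f' (g x)) x := by
  have := (mulCLM a b c).hasFDerivAt_of_bilinear hf hg
  exact this

lemma trace_mul_single {a b : ℕ} (M : Matrix (Fin a) (Fin b) ℝ) (i : Fin b) (j : Fin a) :
    (M * Matrix.single i j (1 : ℝ)).trace = M j i := by
  simp [Matrix.trace, Matrix.diag, Matrix.mul_apply, Matrix.single, ite_and]


lemma pow_hasFDerivAt {n : ℕ} (k : ℕ) (A : Matrix (Fin n) (Fin n) ℝ) :
    ∃ L : Matrix (Fin n) (Fin n) ℝ →L[ℝ] Matrix (Fin n) (Fin n) ℝ,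
      HasFDerivAt (fun M : Matrix (Fin n) (Fin n) ℝ => M ^ k) L A ∧
      ∀ U, L U = ∑ i ∈ Finset.range k, A ^ i * U * A ^ (k - 1 - i) := by
  induction k with
  | zero =>
    refine ⟨0, ?_, by simp⟩
    simpa using hasFDerivAt_const (1 : Matrix (Fin n) (Fin n) ℝ) A
  | succ k ih =>
    obtain ⟨L, hL, happ⟩ := ih
    refine ⟨(mulCLM n n n).precompR _ (A ^ k) (ContinuousLinearMap.id ℝ _) +
      (mulCLM n n n).precompL _ L A, ?_, ?_⟩
    · have h := hasFDerivAt_matmul hL (hasFDerivAt_id A)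
      exact h
    · intro U
      change A ^ k * U + L U * A = _
      rw [happ]
      rw [Finset.sum_range_succ]
      rw [Finset.sum_mul]
      have : ∀ i ∈ Finset.range k,
          A ^ i * U * A ^ (k - 1 - i) * A = A ^ i * U * A ^ (k + 1 - 1 - i) := by
        intro i hi
        rw [Finset.mem_range] at hi
        have h2 : k - 1 - i + 1 = k + 1 - 1 - i := by omega
        rw [mul_assoc, mul_assoc, ← pow_succ, h2, ← mul_assoc]
      rw [Finset.sum_congr rfl this]
      have hk : k + 1 - 1 - k = 0 := by omega
      rw [hk, pow_zero, mul_one]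
      exact add_comm _ _


noncomputable def traceCLM (n : ℕ) : Matrix (Fin n) (Fin n) ℝ →L[ℝ] ℝ :=
  LinearMap.toContinuousLinearMap (Matrix.traceLinearMap (Fin n) ℝ ℝ)

@[simp] lemma traceCLM_apply {n : ℕ} (M : Matrix (Fin n) (Fin n) ℝ) :
    traceCLM n M = M.trace := rfl

lemma Ihat2_hasFDerivAt {n : ℕ} (k : ℕ) (p : WW n) :
    ∃ L : WW n →L[ℝ] ℝ, HasFDerivAt (Ihat2 k) L p ∧
      ∀ U : WW n, L U =
        ((∑ i ∈ Finset.range k, p.1 ^ i * U.1 * p.1 ^ (k - 1 - i)) *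
            (p.2.2.1 * p.2.2.2.1 + p.2.2.2.2.2 * p.2.2.2.2.1)).trace +
        (p.1 ^ k * ((p.2.2.1 * U.2.2.2.1 + U.2.2.1 * p.2.2.2.1) +
            (p.2.2.2.2.2 * U.2.2.2.2.1 + U.2.2.2.2.2 * p.2.2.2.2.1))).trace := by
  have hA : HasFDerivAt (fun q : WW n => q.1)
      (ContinuousLinearMap.fst ℝ _ _) p := hasFDerivAt_fst
  have hxm : HasFDerivAt (fun q : WW n => q.2.2.1)
      ((ContinuousLinearMap.fst ℝ _ _).comp ((ContinuousLinearMap.snd ℝ _ _).comp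
        (ContinuousLinearMap.snd ℝ _ _))) p :=
    hasFDerivAt_fst.comp p (hasFDerivAt_snd.comp p hasFDerivAt_snd)
  have hxim : HasFDerivAt (fun q : WW n => q.2.2.2.1)
      ((ContinuousLinearMap.fst ℝ _ _).comp ((ContinuousLinearMap.snd ℝ _ _).comp
        ((ContinuousLinearMap.snd ℝ _ _).comp (ContinuousLinearMap.snd ℝ _ _)))) p :=
    hasFDerivAt_fst.comp p (hasFDerivAt_snd.comp p (hasFDerivAt_snd.comp p hasFDerivAt_snd))
  have hym : HasFDerivAt (fun q : WW n => q.2.2.2.2.1)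
      ((ContinuousLinearMap.fst ℝ _ _).comp ((ContinuousLinearMap.snd ℝ _ _).comp
        ((ContinuousLinearMap.snd ℝ _ _).comp ((ContinuousLinearMap.snd ℝ _ _).comp
          (ContinuousLinearMap.snd ℝ _ _))))) p :=
    hasFDerivAt_fst.comp p (hasFDerivAt_snd.comp p (hasFDerivAt_snd.comp p
      (hasFDerivAt_snd.comp p hasFDerivAt_snd)))
  have hum : HasFDerivAt (fun q : WW n => q.2.2.2.2.2)
      ((ContinuousLinearMap.snd ℝ _ _).comp ((ContinuousLinearMap.snd ℝ _ _).comp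
        ((ContinuousLinearMap.snd ℝ _ _).comp ((ContinuousLinearMap.snd ℝ _ _).comp
          (ContinuousLinearMap.snd ℝ _ _))))) p :=
    hasFDerivAt_snd.comp p (hasFDerivAt_snd.comp p (hasFDerivAt_snd.comp p
      (hasFDerivAt_snd.comp p hasFDerivAt_snd)))
  have hC := (hasFDerivAt_matmul hxm hxim).add (hasFDerivAt_matmul hum hym)
  obtain ⟨Lp, hLp, happ⟩ := pow_hasFDerivAt k p.1
  have hpow : HasFDerivAt (fun q : WW n => q.1 ^ k)
      (Lp.comp (ContinuousLinearMap.fst ℝ _ _)) p := hLp.comp p hA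
  have hmain := hasFDerivAt_matmul hpow hC
  have htr := (traceCLM n).hasFDerivAt.comp p hmain
  refine ⟨_, htr, ?_⟩
  intro U
  change (p.1 ^ k * ((p.2.2.1 * U.2.2.2.1 + U.2.2.1 * p.2.2.2.1) +
      (p.2.2.2.2.2 * U.2.2.2.2.1 + U.2.2.2.2.2 * p.2.2.2.2.1)) +
      Lp U.1 * (p.2.2.1 * p.2.2.2.1 + p.2.2.2.2.2 * p.2.2.2.2.1)).trace = _
  rw [happ]
  rw [Matrix.trace_add, add_comm]

lemma fderiv_Ihat2_apply {n : ℕ} (k : ℕ) (p U : WW n) :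
    fderiv ℝ (Ihat2 k) p U =
      ((∑ i ∈ Finset.range k, p.1 ^ i * U.1 * p.1 ^ (k - 1 - i)) *
          (p.2.2.1 * p.2.2.2.1 + p.2.2.2.2.2 * p.2.2.2.2.1)).trace +
      (p.1 ^ k * ((p.2.2.1 * U.2.2.2.1 + U.2.2.1 * p.2.2.2.1) +
          (p.2.2.2.2.2 * U.2.2.2.2.1 + U.2.2.2.2.2 * p.2.2.2.2.1))).trace := by
  obtain ⟨L, hL, happ⟩ := Ihat2_hasFDerivAt k p
  rw [hL.fderiv]
  exact happ U

lemma gB_Ihat2 {n : ℕ} (k : ℕ) (p : WW n) : gB (Ihat2 k) p = 0 := by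
  funext i j
  simp [gB, fderiv_Ihat2_apply]

lemma gA_Ihat2 {n : ℕ} (k : ℕ) (p : WW n) :
    gA (Ihat2 k) p = ∑ i ∈ Finset.range k,
      p.1 ^ (k - 1 - i) * (p.2.2.1 * p.2.2.2.1 + p.2.2.2.2.2 * p.2.2.2.2.1) * p.1 ^ i := by
  funext a b
  simp only [gA, fderiv_Ihat2_apply, Matrix.mul_zero, Matrix.zero_mul, add_zero, zero_add,
    Matrix.trace_zero]
  rw [Finset.sum_mul, Matrix.trace_sum, Matrix.sum_apply]
  refine Finset.sum_congr rfl fun i _ => ?_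
  rw [mul_assoc, Matrix.trace_mul_comm, ← mul_assoc, trace_mul_single]

lemma gx_Ihat2 {n : ℕ} (k : ℕ) (p : WW n) :
    gx (Ihat2 k) p = p.2.2.2.1 * p.1 ^ k := by
  funext a b
  have ha : a = 0 := Subsingleton.elim a 0
  subst ha
  simp only [gx, fderiv_Ihat2_apply, Matrix.mul_zero, Matrix.zero_mul, add_zero, zero_add,
    Matrix.trace_zero, Finset.sum_const_zero]
  rw [← Matrix.mul_assoc, Matrix.trace_mul_comm, ← Matrix.mul_assoc, trace_mul_single]

lemma gxi_Ihat2 {n : ℕ} (k : ℕ) (p : WW n) :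
    gxi (Ihat2 k) p = p.1 ^ k * p.2.2.1 := by
  funext a b
  have hb : b = 0 := Subsingleton.elim b 0
  subst hb
  simp only [gxi, fderiv_Ihat2_apply, Matrix.mul_zero, Matrix.zero_mul, add_zero, zero_add,
    Matrix.trace_zero, Finset.sum_const_zero]
  rw [← Matrix.mul_assoc, trace_mul_single]

lemma gy_Ihat2 {n : ℕ} (k : ℕ) (p : WW n) :
    gy (Ihat2 k) p = p.1 ^ k * p.2.2.2.2.2 := by
  funext a b
  have hb : b = 0 := Subsingleton.elim b 0
  subst hb
  simp only [gy, fderiv_Ihat2_apply, Matrix.mul_zero, Matrix.zero_mul, add_zero, zero_add,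
    Matrix.trace_zero, Finset.sum_const_zero]
  rw [← Matrix.mul_assoc, trace_mul_single]

lemma gu_Ihat2 {n : ℕ} (k : ℕ) (p : WW n) :
    gu (Ihat2 k) p = p.2.2.2.2.1 * p.1 ^ k := by
  funext a b
  have ha : a = 0 := Subsingleton.elim a 0
  subst ha
  simp only [gu, fderiv_Ihat2_apply, Matrix.mul_zero, Matrix.zero_mul, add_zero, zero_add,
    Matrix.trace_zero, Finset.sum_const_zero]
  rw [← Matrix.mul_assoc, Matrix.trace_mul_comm, ← Matrix.mul_assoc, trace_mul_single]

lemma key_sum {n : ℕ} (k : ℕ) (A C : Matrix (Fin n) (Fin n) ℝ) :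
    (∑ i ∈ Finset.range k, A ^ (k - 1 - i) * C * A ^ i) * A + A ^ k * C =
      ∑ i ∈ Finset.range (k + 1), A ^ (k - i) * C * A ^ i := by
  rw [Finset.sum_range_succ']
  rw [Finset.sum_mul]
  simp only [Nat.sub_zero, pow_zero, mul_one]
  congr 1
  refine Finset.sum_congr rfl fun i hi => ?_
  rw [Finset.mem_range] at hi
  have h2 : k - 1 - i = k - (i + 1) := by omega
  rw [mul_assoc, ← pow_succ, h2]

end LenardAux

open LenardAux in
/-- The Hamiltonians `Î^{(2)}_k` form a Lenard chain with respect to the two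
Gibbons-Hermsen brackets: `{Î^{(2)}_k, g}_1 = {Î^{(2)}_{k+1}, g}_0` for every smooth
`g` and every `k ≥ 0`. -/
theorem Ihat2_lenardChain (n : ℕ) (hn : 1 ≤ n) (k : ℕ) (g : WW n → ℝ) (hg : SmoothFn g) :
    ∀ p : WW n, br1 (Ihat2 k) g p = br0 (Ihat2 (k + 1)) g p := by
  intro p
  unfold br0 br1
  rw [gA_Ihat2, gB_Ihat2, gx_Ihat2, gxi_Ihat2, gy_Ihat2, gu_Ihat2,
    gA_Ihat2, gB_Ihat2, gx_Ihat2, gxi_Ihat2, gy_Ihat2, gu_Ihat2]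
  simp only [Matrix.mul_zero, Matrix.zero_mul,
    Matrix.trace_zero, zero_sub, sub_zero, zero_add, add_zero, zero_mul, mul_zero]
  have h1 : gx g p * p.1 * (p.1 ^ k * p.2.2.1) = gx g p * (p.1 ^ (k + 1) * p.2.2.1) := by
    rw [pow_succ']; simp [Matrix.mul_assoc]
  have h2 : p.2.2.2.1 * p.1 ^ k * p.1 = p.2.2.2.1 * p.1 ^ (k + 1) := by
    rw [pow_succ]; simp [Matrix.mul_assoc]
  have h3 : p.2.2.2.2.1 * p.1 ^ k * p.1 = p.2.2.2.2.1 * p.1 ^ (k + 1) := by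
    rw [pow_succ]; simp [Matrix.mul_assoc]
  have h4 : gu g p * p.1 * (p.1 ^ k * p.2.2.2.2.2) = gu g p * (p.1 ^ (k + 1) * p.2.2.2.2.2) := by
    rw [pow_succ']; simp [Matrix.mul_assoc]
  have h5 : (-((∑ i ∈ Finset.range k,
        p.1 ^ (k - 1 - i) * (p.2.2.1 * p.2.2.2.1 + p.2.2.2.2.2 * p.2.2.2.2.1) * p.1 ^ i) * p.1) -
      p.1 ^ k * p.2.2.1 * p.2.2.2.1 - p.1 ^ k * p.2.2.2.2.2 * p.2.2.2.2.1) =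
      -(∑ i ∈ Finset.range (k + 1),
        p.1 ^ (k + 1 - 1 - i) * (p.2.2.1 * p.2.2.2.1 + p.2.2.2.2.2 * p.2.2.2.2.1) * p.1 ^ i) := by
    simp only [Nat.add_sub_cancel]
    rw [← key_sum k p.1]
    rw [Matrix.mul_add, ← Matrix.mul_assoc, ← Matrix.mul_assoc]
    abel
  rw [h1, h2, h3, h4, h5]
  rw [Matrix.mul_neg, Matrix.trace_neg, Matrix.neg_mul, Matrix.trace_neg,
    Matrix.trace_mul_comm (gB g p), Matrix.trace_neg]
  ring
end

section
/- The Gibbons-Hermsen Hamiltonians Î_k form a Lenard chain with respect to the two brackets: for every integer k ≥ 1 and every smooth function g : W → ℝ, one has {Î_k, g}_1 = {Î_{k+1}, g}_0 identically on W, where Î_k(A,B,x,ξ,y,υ) = (1/k) tr(A^k). -/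
attribute [local instance] Matrix.normedAddCommGroup Matrix.normedSpace

/-- The Gibbons-Hermsen Hamiltonian `Î_k(A,B,x,ξ,y,υ) = (1/k) tr(A^k)`. -/
noncomputable def Ihat {n : ℕ} (k : ℕ) (p : WW n) : ℝ := (1 / (k : ℝ)) * (p.1 ^ k).trace


section LenardAux

open Matrix Finset

variable {n : ℕ}


variable {n : ℕ}

noncomputable def mulCLM (n : ℕ) :
    Matrix (Fin n) (Fin n) ℝ →L[ℝ] Matrix (Fin n) (Fin n) ℝ →L[ℝ] Matrix (Fin n) (Fin n) ℝ :=
  LinearMap.toContinuousLinearMap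
    { toFun := fun A => LinearMap.toContinuousLinearMap
        { toFun := fun B => A * B
          map_add' := fun B C => by simp [Matrix.mul_add]
          map_smul' := fun c B => by simp [Matrix.mul_smul] }
      map_add' := fun A B => by ext C : 1; simp [Matrix.add_mul]
      map_smul' := fun c A => by ext B : 1; simp [Matrix.smul_mul] }

@[simp] lemma mulCLM_apply (A B : Matrix (Fin n) (Fin n) ℝ) : mulCLM n A B = A * B := rfl

/-- The sandwich map `U ↦ C * U * D` as a continuous linear map. -/
noncomputable def sandL (n : ℕ) (C D : Matrix (Fin n) (Fin n) ℝ) :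
    Matrix (Fin n) (Fin n) ℝ →L[ℝ] Matrix (Fin n) (Fin n) ℝ :=
  LinearMap.toContinuousLinearMap
    { toFun := fun U => C * U * D
      map_add' := fun U V => by simp [Matrix.mul_add, Matrix.add_mul]
      map_smul' := fun c U => by simp [Matrix.mul_smul, Matrix.smul_mul] }

@[simp] lemma sandL_apply (C D U : Matrix (Fin n) (Fin n) ℝ) : sandL n C D U = C * U * D := rfl

lemma hasFDerivAt_matPow (k : ℕ) (A : Matrix (Fin n) (Fin n) ℝ) :
    HasFDerivAt (fun X : Matrix (Fin n) (Fin n) ℝ => X ^ k)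
      (∑ i ∈ Finset.range k, sandL n (A ^ i) (A ^ (k - 1 - i))) A := by
  induction k with
  | zero =>
      simp only [pow_zero, Finset.range_zero, Finset.sum_empty]
      exact hasFDerivAt_const _ _
  | succ k ih =>
      have hprod : HasFDerivAt (fun X : Matrix (Fin n) (Fin n) ℝ => (X ^ k, X))
          ((∑ i ∈ Finset.range k, sandL n (A ^ i) (A ^ (k - 1 - i))).prod
            (ContinuousLinearMap.id ℝ _)) A := ih.prodMk (hasFDerivAt_id A)
      have hb : HasFDerivAt ((fun q : Matrix (Fin n) (Fin n) ℝ × Matrix (Fin n) (Fin n) ℝ =>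
            q.1 * q.2) ∘ (fun X : Matrix (Fin n) (Fin n) ℝ => (X ^ k, X)))
          (((mulCLM n).isBoundedBilinearMap.deriv (A ^ k, A)).comp
            ((∑ i ∈ Finset.range k, sandL n (A ^ i) (A ^ (k - 1 - i))).prod
              (ContinuousLinearMap.id ℝ _))) A :=
        HasFDerivAt.comp (f := fun X : Matrix (Fin n) (Fin n) ℝ => (X ^ k, X)) A
          ((mulCLM n).isBoundedBilinearMap.hasFDerivAt (A ^ k, A)) hprod
      have : (fun X : Matrix (Fin n) (Fin n) ℝ => X ^ (k + 1)) =
          fun X => X ^ k * X := by funext X; rw [pow_succ]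
      rw [this]
      have hb' : HasFDerivAt (fun X : Matrix (Fin n) (Fin n) ℝ => X ^ k * X)
          (((mulCLM n).isBoundedBilinearMap.deriv (A ^ k, A)).comp
            ((∑ i ∈ Finset.range k, sandL n (A ^ i) (A ^ (k - 1 - i))).prod
              (ContinuousLinearMap.id ℝ _))) A := hb
      refine HasFDerivAt.congr_fderiv hb' (Eq.symm ?_)
      apply ContinuousLinearMap.ext
      intro U
      show (∑ i ∈ Finset.range (k + 1), sandL n (A ^ i) (A ^ (k + 1 - 1 - i))) U =
        A ^ k * U + (∑ i ∈ Finset.range k, sandL n (A ^ i) (A ^ (k - 1 - i))) U * A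
      simp only [ContinuousLinearMap.coe_comp', Function.comp_apply,
        IsBoundedBilinearMap.deriv_apply, ContinuousLinearMap.prod_apply,
        ContinuousLinearMap.coe_id', id, mulCLM_apply,
        ContinuousLinearMap.coe_sum', Finset.sum_apply, sandL_apply]
      rw [Finset.sum_range_succ]
      have h1 : k + 1 - 1 - k = 0 := by omega
      rw [h1, pow_zero, mul_one, Finset.sum_mul]
      have h2 : ∀ i ∈ Finset.range k,
          A ^ i * U * A ^ (k + 1 - 1 - i) = A ^ i * U * A ^ (k - 1 - i) * A := by
        intro i hi
        rw [Finset.mem_range] at hi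
        have he : k + 1 - 1 - i = (k - 1 - i) + 1 := by omega
        rw [he, pow_succ, ← mul_assoc]
      rw [Finset.sum_congr rfl h2]
      abel

noncomputable def trCLM (n : ℕ) : Matrix (Fin n) (Fin n) ℝ →L[ℝ] ℝ :=
  LinearMap.toContinuousLinearMap (Matrix.traceLinearMap (Fin n) ℝ ℝ)

@[simp] lemma trCLM_apply (A : Matrix (Fin n) (Fin n) ℝ) : trCLM n A = A.trace := rfl

lemma fderiv_Ihat_apply (k : ℕ) (hk : 1 ≤ k) (p : WW n) (v : WW n) :
    fderiv ℝ (Ihat k) p v = (p.1 ^ (k - 1) * v.1).trace := by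
  have hfst : HasFDerivAt (Prod.fst : WW n → Matrix (Fin n) (Fin n) ℝ)
      (ContinuousLinearMap.fst ℝ _ _) p := hasFDerivAt_fst
  have hcomp : HasFDerivAt (fun q : WW n => q.1 ^ k)
      ((∑ i ∈ Finset.range k, sandL n (p.1 ^ i) (p.1 ^ (k - 1 - i))).comp
        (ContinuousLinearMap.fst ℝ _ _)) p :=
    HasFDerivAt.comp (f := (Prod.fst : WW n → Matrix (Fin n) (Fin n) ℝ)) p
      (hasFDerivAt_matPow k p.1) hfst
  have htr : HasFDerivAt (fun q : WW n => (q.1 ^ k).trace)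
      ((trCLM n).comp ((∑ i ∈ Finset.range k, sandL n (p.1 ^ i) (p.1 ^ (k - 1 - i))).comp
        (ContinuousLinearMap.fst ℝ _ _))) p :=
    HasFDerivAt.comp (f := fun q : WW n => q.1 ^ k) p ((trCLM n).hasFDerivAt) hcomp
  have hI : HasFDerivAt (Ihat k)
      ((1 / (k : ℝ)) • (trCLM n).comp
        ((∑ i ∈ Finset.range k, sandL n (p.1 ^ i) (p.1 ^ (k - 1 - i))).comp
          (ContinuousLinearMap.fst ℝ _ _))) p := by
    exact htr.const_mul (1 / (k : ℝ))
  rw [hI.fderiv]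
  simp only [ContinuousLinearMap.coe_smul', Pi.smul_apply, ContinuousLinearMap.coe_comp',
    Function.comp_apply, ContinuousLinearMap.coe_fst', trCLM_apply,
    ContinuousLinearMap.coe_sum', Finset.sum_apply, sandL_apply, Matrix.trace_sum]
  have hterm : ∀ i ∈ Finset.range k,
      (p.1 ^ i * v.1 * p.1 ^ (k - 1 - i)).trace = (p.1 ^ (k - 1) * v.1).trace := by
    intro i hi
    rw [Finset.mem_range] at hi
    rw [Matrix.trace_mul_comm, ← mul_assoc, ← pow_add]
    have he : k - 1 - i + i = k - 1 := by omega
    rw [he]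
  rw [Finset.sum_congr rfl hterm, Finset.sum_const, Finset.card_range, nsmul_eq_mul,
    smul_eq_mul, ← mul_assoc]
  have hk' : (k : ℝ) ≠ 0 := Nat.cast_ne_zero.mpr (by omega)
  field_simp

lemma trace_mul_stdBasis (M : Matrix (Fin n) (Fin n) ℝ) (i j : Fin n) :
    (M * Matrix.single j i 1).trace = M i j := by
  classical
  simp only [Matrix.trace, Matrix.diag, Matrix.mul_apply, Matrix.single, Matrix.of_apply,
    mul_ite, mul_one, mul_zero]
  rw [Finset.sum_eq_single i]
  · rw [Finset.sum_eq_single j]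
    · simp
    · intro b _ hb
      simp [hb.symm]
    · simp
  · intro b _ hb
    apply Finset.sum_eq_zero
    intro m _
    simp [hb.symm]
  · simp

lemma gA_Ihat (k : ℕ) (hk : 1 ≤ k) (p : WW n) : gA (Ihat k) p = p.1 ^ (k - 1) := by
  funext i j
  show fderiv ℝ (Ihat k) p (Matrix.single j i 1, 0, 0, 0, 0, 0) = _
  rw [fderiv_Ihat_apply k hk]
  exact trace_mul_stdBasis _ i j

lemma gB_Ihat (k : ℕ) (hk : 1 ≤ k) (p : WW n) : gB (Ihat k) p = 0 := by
  funext i j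
  show fderiv ℝ (Ihat k) p (0, Matrix.single j i 1, 0, 0, 0, 0) = _
  rw [fderiv_Ihat_apply k hk]
  simp

lemma gx_Ihat (k : ℕ) (hk : 1 ≤ k) (p : WW n) : gx (Ihat k) p = 0 := by
  funext i j
  show fderiv ℝ (Ihat k) p (0, 0, Matrix.single j 0 1, 0, 0, 0) = _
  rw [fderiv_Ihat_apply k hk]
  simp

lemma gxi_Ihat (k : ℕ) (hk : 1 ≤ k) (p : WW n) : gxi (Ihat k) p = 0 := by
  funext i j
  show fderiv ℝ (Ihat k) p (0, 0, 0, Matrix.single 0 i 1, 0, 0) = _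
  rw [fderiv_Ihat_apply k hk]
  simp

lemma gy_Ihat (k : ℕ) (hk : 1 ≤ k) (p : WW n) : gy (Ihat k) p = 0 := by
  funext i j
  show fderiv ℝ (Ihat k) p (0, 0, 0, 0, Matrix.single 0 i 1, 0) = _
  rw [fderiv_Ihat_apply k hk]
  simp

lemma gu_Ihat (k : ℕ) (hk : 1 ≤ k) (p : WW n) : gu (Ihat k) p = 0 := by
  funext i j
  show fderiv ℝ (Ihat k) p (0, 0, 0, 0, 0, Matrix.single j 0 1) = _
  rw [fderiv_Ihat_apply k hk]
  simp

end LenardAux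

/-- The Hamiltonians `Î_k` form a Lenard chain with respect to the two Gibbons-Hermsen
brackets: `{Î_k, g}_1 = {Î_{k+1}, g}_0` for every smooth `g` and every `k ≥ 1`. -/
theorem Ihat_lenardChain (n : ℕ) (hn : 1 ≤ n) (k : ℕ) (hk : 1 ≤ k)
    (g : WW n → ℝ) (hg : SmoothFn g) :
    ∀ p : WW n, br1 (Ihat k) g p = br0 (Ihat (k + 1)) g p := by
  intro p
  have hk1 : 1 ≤ k + 1 := by omega
  have hpow : p.1 ^ (k - 1) * p.1 = p.1 ^ k := by
    rw [← pow_succ]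
    congr 1
    omega
  have hsucc : (k + 1) - 1 = k := by omega
  unfold br1 br0
  rw [gA_Ihat k hk, gB_Ihat k hk, gx_Ihat k hk, gxi_Ihat k hk, gy_Ihat k hk, gu_Ihat k hk,
    gA_Ihat (k+1) hk1, gB_Ihat (k+1) hk1, gx_Ihat (k+1) hk1, gxi_Ihat (k+1) hk1,
    gy_Ihat (k+1) hk1, gu_Ihat (k+1) hk1, hsucc]
  simp only [Matrix.mul_zero, Matrix.zero_mul, Matrix.trace_zero, add_zero, zero_add,
    sub_zero, zero_sub, zero_mul, mul_zero]
  rw [hpow]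
  simp only [Matrix.mul_neg, Matrix.trace_neg]
  rw [Matrix.trace_mul_comm]
end
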